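/- arXiv:2406.19854 — 2 statements merged into one kernel-verified Lean document; each statement's English description precedes it below -/
import Mathlib

section
/- Let X be a symmetric simplicial set. Then X is spiny (i.e., 𝓔_T is injective for every n ≥ 1 and every spine T of [n]) if and only if for each n ≥ 1 there exists at least one spine T of [n] such that 𝓔_T : X_n → lim_T X is injective. -/
/-- A symmetric (simplicial) set: a functor `Υᵒᵖ → Set`, where `Υ` has objects
`[n] = {0,…,n}` (encoded as `Fin (n+1)`) and all functions as morphisms.
For `α : [m] → [n]` and `x ∈ X_n`, `act α x` is `x · α ∈ X_m`. -/
structure SymSet where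
  obj : ℕ → Type
  act : ∀ {m n : ℕ}, (Fin (m + 1) → Fin (n + 1)) → obj n → obj m
  act_id : ∀ {n : ℕ} (x : obj n), act id x = x
  act_comp : ∀ {m n k : ℕ} (α : Fin (m + 1) → Fin (n + 1)) (β : Fin (n + 1) → Fin (k + 1))
      (x : obj k), act α (act β x) = act (β ∘ α) x

namespace SymSet

/-- `x_{ij} ∈ X_1`, the action on `x ∈ X_n` of the map `[1] → [n]` with `0 ↦ i`, `1 ↦ j`. -/
def edge (X : SymSet) {n : ℕ} (i j : Fin (n + 1)) (x : X.obj n) : X.obj 1 :=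
  X.act (fun t : Fin 2 => if t = 0 then i else j) x

/-- The domain of an edge, its image under `ι₀ : [0] → [1]`, `0 ↦ 0`. -/
def edgeDom (X : SymSet) (f : X.obj 1) : X.obj 0 :=
  X.act (fun _ : Fin 1 => (0 : Fin 2)) f

/-- The codomain of an edge, its image under `ι₁ : [0] → [1]`, `0 ↦ 1`. -/
def edgeCod (X : SymSet) (f : X.obj 1) : X.obj 0 :=
  X.act (fun _ : Fin 1 => (1 : Fin 2)) f

/-- The identity edge `id_a` on an object `a ∈ X_0`, induced by the unique map `[1] → [0]`. -/
def identityEdge (X : SymSet) (a : X.obj 0) : X.obj 1 :=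
  X.act (fun _ : Fin 2 => (0 : Fin 1)) a

/-- An edge is an identity if it is in the image of `X_0 → X_1`. -/
def IsIdentityEdge (X : SymSet) (f : X.obj 1) : Prop :=
  ∃ a : X.obj 0, f = X.identityEdge a

/-- The tuple of edges `x_{ij}` (for `i < j` an edge `{i,j}` of the spine `T`)
associated to an `n`-simplex `x`. -/
def spineTuple (X : SymSet) {n : ℕ} (T : SimpleGraph (Fin (n + 1))) (x : X.obj n) :
    ∀ i j : Fin (n + 1), i < j → T.Adj i j → X.obj 1 :=
  fun i j _ _ => X.edge i j x

/-- Membership in `lim_T X`: the components have matching endpoints. -/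
def IsSpineLim (X : SymSet) {n : ℕ} (T : SimpleGraph (Fin (n + 1)))
    (e : ∀ i j : Fin (n + 1), i < j → T.Adj i j → X.obj 1) : Prop :=
  ∃ v : Fin (n + 1) → X.obj 0, ∀ (i j : Fin (n + 1)) (hlt : i < j) (h : T.Adj i j),
    X.edgeDom (e i j hlt h) = v i ∧ X.edgeCod (e i j hlt h) = v j

/-- The limit `lim_T X` of the diagram associated to a spine `T`. -/
def SpineLim (X : SymSet) {n : ℕ} (T : SimpleGraph (Fin (n + 1))) : Type :=
  { e : ∀ i j : Fin (n + 1), i < j → T.Adj i j → X.obj 1 // X.IsSpineLim T e }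

lemma spineTuple_isSpineLim (X : SymSet) {n : ℕ} (T : SimpleGraph (Fin (n + 1)))
    (x : X.obj n) : X.IsSpineLim T (X.spineTuple T x) := by
  refine ⟨fun i => X.act (fun _ : Fin 1 => i) x, fun i j hlt h => ⟨?_, ?_⟩⟩
  · show X.act _ (X.act _ x) = _
    rw [X.act_comp]
    show X.act ((fun t : Fin 2 => if t = 0 then i else j) ∘ fun _ : Fin 1 => 0) x
      = X.act (fun _ : Fin 1 => i) x
    congr 1
  · show X.act _ (X.act _ x) = _
    rw [X.act_comp]
    show X.act ((fun t : Fin 2 => if t = 0 then i else j) ∘ fun _ : Fin 1 => 1) x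
      = X.act (fun _ : Fin 1 => j) x
    congr 1

/-- The map `𝓔_T : X_n → lim_T X`. -/
def spineMap (X : SymSet) {n : ℕ} (T : SimpleGraph (Fin (n + 1))) (x : X.obj n) :
    X.SpineLim T :=
  ⟨X.spineTuple T x, X.spineTuple_isSpineLim T x⟩

/-- A symmetric set is *spiny* if `𝓔_T` is injective for every `n ≥ 1` and
every spine `T` of `[n]` (a tree with vertex set `[n]`). -/
def Spiny (X : SymSet) : Prop :=
  ∀ n : ℕ, 1 ≤ n → ∀ T : SimpleGraph (Fin (n + 1)), T.IsTree →
    Function.Injective (X.spineMap T)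

/-- An element `x ∈ X_n` is degenerate if `x = y · σ` for some noninvertible
surjection `σ : [n] → [k]`. -/
def Degenerate (X : SymSet) {n : ℕ} (x : X.obj n) : Prop :=
  ∃ (k : ℕ) (σ : Fin (n + 1) → Fin (k + 1)) (y : X.obj k),
    Function.Surjective σ ∧ ¬ Function.Bijective σ ∧ x = X.act σ y

/-- A symmetric subset (subfunctor) of `X`. -/
structure SymSubset (X : SymSet) where
  carrier : ∀ n : ℕ, Set (X.obj n)
  act_mem : ∀ {m n : ℕ} (α : Fin (m + 1) → Fin (n + 1)) {x : X.obj n},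
    x ∈ carrier n → X.act α x ∈ carrier m

/-- `X` is `n`-skeletal: the smallest symmetric subset of `X` containing all
of its `n`-simplices is all of `X`. -/
def IsSkeletal (X : SymSet) (n : ℕ) : Prop :=
  ∀ Y : SymSubset X, (∀ x : X.obj n, x ∈ Y.carrier n) →
    ∀ (m : ℕ) (x : X.obj m), x ∈ Y.carrier m

/-- `X` has dimension `n`: it is `n`-skeletal but not `k`-skeletal for `k < n`
(for `n ≥ 1` this is equivalent to not being `(n-1)`-skeletal). -/
def HasDim (X : SymSet) (n : ℕ) : Prop :=
  X.IsSkeletal n ∧ ∀ k : ℕ, k < n → ¬ X.IsSkeletal k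

/-- Two objects are related if there is an edge between them (in either direction). -/
def EdgeRel (X : SymSet) (a b : X.obj 0) : Prop :=
  ∃ f : X.obj 1, (X.edgeDom f = a ∧ X.edgeCod f = b) ∨ (X.edgeDom f = b ∧ X.edgeCod f = a)

/-- `X` is connected: it is nonempty and any two objects are joined by a
zig-zag of edges. -/
def Connected (X : SymSet) : Prop :=
  Nonempty (X.obj 0) ∧ ∀ a b : X.obj 0, Relation.ReflTransGen X.EdgeRel a b

/-- `n_a`: the number of nonidentity edges with domain `a`. -/
noncomputable def nEdges (X : SymSet) (a : X.obj 0) : ℕ :=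
  Nat.card { f : X.obj 1 // X.edgeDom f = a ∧ ¬ X.IsIdentityEdge f }

/-- `p(X)`: the maximum of the `n_a` over all objects `a`. -/
noncomputable def pVal (X : SymSet) : ℕ := ⨆ a : X.obj 0, X.nEdges a

/-- A map of symmetric sets (a natural transformation). -/
structure SymMap (X Y : SymSet) where
  app : ∀ n : ℕ, X.obj n → Y.obj n
  naturality : ∀ {m n : ℕ} (α : Fin (m + 1) → Fin (n + 1)) (x : X.obj n),
    app m (X.act α x) = Y.act α (app n x)

/-- A map of symmetric sets is an isomorphism iff it is levelwise bijective. -/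
def SymMap.IsIso {X Y : SymSet} (F : SymMap X Y) : Prop :=
  ∀ n : ℕ, Function.Bijective (F.app n)

/-- `X` and `Y` are isomorphic symmetric sets. -/
def Isomorphic (X Y : SymSet) : Prop := ∃ F : SymMap X Y, F.IsIso

/-- The Bousfield–Segal map `𝓑_m : X_m → X_1^m`, `x ↦ (x_{01}, x_{02}, …, x_{0m})`. -/
def bousfield (X : SymSet) {m : ℕ} (x : X.obj m) : Fin m → X.obj 1 :=
  fun i => X.edge 0 i.succ x

/-- `X` is spiny in degrees below `q`: `𝓔_T` is injective for every spine `T`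
of `[n]` for each `1 ≤ n ≤ q`. -/
def SpinyBelow (X : SymSet) (q : ℕ) : Prop :=
  ∀ n : ℕ, 1 ≤ n → n ≤ q → ∀ T : SimpleGraph (Fin (n + 1)), T.IsTree →
    Function.Injective (X.spineMap T)

/-- `X` is a groupoid: `𝓔_T : X_n → lim_T X` is a bijection for every `n ≥ 1`
and every spine `T` of `[n]`. -/
def IsGroupoid (X : SymSet) : Prop :=
  ∀ n : ℕ, 1 ≤ n → ∀ T : SimpleGraph (Fin (n + 1)), T.IsTree →
    Function.Bijective (X.spineMap T)

/-- `X` is reduced: `X_0` is a singleton. -/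
def Reduced (X : SymSet) : Prop := Nonempty (X.obj 0) ∧ Subsingleton (X.obj 0)

/-- A partial group is a reduced spiny symmetric set. -/
def IsPartialGroup (X : SymSet) : Prop := X.Reduced ∧ X.Spiny

/-- The levelwise product of two symmetric sets. -/
def prod (X Y : SymSet) : SymSet where
  obj n := X.obj n × Y.obj n
  act α p := (X.act α p.1, Y.act α p.2)
  act_id p := by cases p with | mk a b => simp only [X.act_id, Y.act_id]
  act_comp α β p := by cases p with | mk a b => simp only [X.act_comp, Y.act_comp]

end SymSet

/-!
A pair `x, y` of `n`-simplices determines the graph on `[n]` of those pairs `{i, j}` on which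
`x_{ij} = y_{ij}`, and `𝓔_T x = 𝓔_T y` says exactly that `T` lies in this graph. Injectivity of
`𝓔_P` for the path `P = 0 - 1 - 2` says that this graph is closed under completing triangles
(pull `x, y` back along `[2] → [n]`, `0, 1, 2 ↦ i, c, j`). Every spine of `[2]` is a relabelling
of `P`, so one injective spine in degree `2` suffices for this. Then agreement along one spine
gives agreement along the complete graph, hence along the injective spine in degree `n`.
-/

open SimpleGraph

theorem SimpleGraph.Preconnected.eq_top_of_le {V : Type*} {G H : SimpleGraph V}
    (hH : H.Preconnected) (hle : H ≤ G)
    (htrans : ∀ {u v w}, G.Adj u v → G.Adj v w → u ≠ w → G.Adj u w) : G = ⊤ := by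
  ext u v
  refine ⟨Adj.ne, fun huv => ?_⟩
  obtain ⟨p⟩ := (hH u v).mono hle
  induction p with
  | nil => exact absurd rfl huv
  | @cons u c w hadj _ ih =>
    by_cases hcw : c = w
    · exact hcw ▸ hadj
    · exact htrans hadj (ih hcw) huv

theorem SimpleGraph.pathGraph_three_le {G : SimpleGraph (Fin 3)} (h01 : G.Adj 0 1)
    (h12 : G.Adj 1 2) : pathGraph 3 ≤ G := by
  intro a b h
  rw [pathGraph_adj] at h
  fin_cases a <;> fin_cases b <;> simp [h01, h12, h01.symm, h12.symm] at h ⊢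

theorem SimpleGraph.IsTree.ne_top_of_fin_three {T : SimpleGraph (Fin 3)} (hT : T.IsTree) :
    T ≠ ⊤ := by
  rintro rfl
  exact isAcyclic_iff_free_cycleGraph.mp hT.isAcyclic 3 le_rfl
    (cycleGraph_three_eq_top ▸ IsContained.rfl)

theorem SimpleGraph.exists_le_comap_pathGraph_three {T : SimpleGraph (Fin 3)} (hT : T ≠ ⊤) :
    ∃ π : Equiv.Perm (Fin 3), T ≤ (pathGraph 3).comap π := by
  have hmissing : ∀ a b : Fin 3, a ≠ b → ∃ π : Equiv.Perm (Fin 3),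
      ∀ i j, i ≠ j → s(i, j) ≠ s(a, b) → (pathGraph 3).Adj (π i) (π j) := by
    simp only [pathGraph_adj]
    decide
  obtain ⟨a, b, hab, hnadj⟩ := ne_top_iff_exists_not_adj.mp hT
  obtain ⟨π, hπ⟩ := hmissing a b hab
  refine ⟨π, fun i j h => hπ i j h.ne fun e => hnadj ?_⟩
  rcases Sym2.eq_iff.mp e with ⟨rfl, rfl⟩ | ⟨rfl, rfl⟩
  exacts [h, h.symm]

namespace SymSet

variable (X : SymSet)

theorem edge_act {m n : ℕ} (α : Fin (m + 1) → Fin (n + 1)) (i j : Fin (m + 1)) (x : X.obj n) :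
    X.edge i j (X.act α x) = X.edge (α i) (α j) x := by
  unfold edge
  rw [X.act_comp]
  congr 1
  funext t
  by_cases ht : t = 0 <;> simp [ht]

theorem edge_swap {n : ℕ} (i j : Fin (n + 1)) (x : X.obj n) :
    X.edge j i x = X.act (fun t : Fin 2 => if t = 0 then 1 else 0) (X.edge i j x) := by
  unfold edge
  rw [X.act_comp]
  congr 1
  funext t
  fin_cases t <;> rfl

theorem act_injective_of_surjective {m n : ℕ} {α : Fin (m + 1) → Fin (n + 1)}
    (hα : Function.Surjective α) : Function.Injective (X.act α) := by
  refine Function.LeftInverse.injective (g := X.act (Function.surjInv hα)) fun x => ?_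
  rw [X.act_comp, (Function.rightInverse_surjInv hα).comp_eq_id, X.act_id]

def agreeGraph {n : ℕ} (x y : X.obj n) : SimpleGraph (Fin (n + 1)) where
  Adj i j := i ≠ j ∧ X.edge i j x = X.edge i j y
  symm := ⟨fun i j h => ⟨h.1.symm, by rw [edge_swap, h.2, ← edge_swap]⟩⟩
  loopless := ⟨fun _ h => h.1 rfl⟩

variable {X}

theorem spineMap_eq_iff {n : ℕ} {T : SimpleGraph (Fin (n + 1))} {x y : X.obj n} :
    X.spineMap T x = X.spineMap T y ↔ T ≤ X.agreeGraph x y := by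
  have hadj_of_lt : ∀ i j (hij : i < j) (h : T.Adj i j), X.spineMap T x = X.spineMap T y →
      (X.agreeGraph x y).Adj i j := fun i j hij h e =>
    ⟨hij.ne, congrFun (congrFun (congrFun (congrFun (congrArg Subtype.val e) i) j) hij) h⟩
  refine ⟨fun e i j h => ?_, fun hle => Subtype.ext ?_⟩
  · rcases lt_or_gt_of_ne h.ne with hij | hji
    exacts [hadj_of_lt i j hij h e, (hadj_of_lt j i hji h.symm e).symm]
  · funext i j _ h
    exact (hle h).2

theorem injective_spineMap_iff {n : ℕ} {T : SimpleGraph (Fin (n + 1))} :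
    Function.Injective (X.spineMap T) ↔ ∀ x y, T ≤ X.agreeGraph x y → x = y := by
  simp only [Function.Injective, spineMap_eq_iff]

theorem comap_agreeGraph_le {m n : ℕ} (α : Fin (m + 1) → Fin (n + 1)) (x y : X.obj n) :
    (X.agreeGraph x y).comap α ≤ X.agreeGraph (X.act α x) (X.act α y) :=
  fun _ _ h => ⟨fun hij => h.1 (congrArg α hij), by rw [edge_act, edge_act]; exact h.2⟩

theorem injective_spineMap_of_le_comap {m n : ℕ} {T : SimpleGraph (Fin (m + 1))}
    {T' : SimpleGraph (Fin (n + 1))} {α : Fin (m + 1) → Fin (n + 1)}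
    (hα : Function.Surjective α) (hle : T ≤ T'.comap α) (hT : Function.Injective (X.spineMap T)) :
    Function.Injective (X.spineMap T') := by
  rw [injective_spineMap_iff] at hT ⊢
  exact fun x y hxy => X.act_injective_of_surjective hα <|
    hT _ _ fun i j h => comap_agreeGraph_le α x y (hxy (hle h))

theorem injective_spineMap_pathGraph_three {T : SimpleGraph (Fin 3)} (hT : T ≠ ⊤)
    (hinj : Function.Injective (X.spineMap T)) : Function.Injective (X.spineMap (pathGraph 3)) :=
  let ⟨π, hπ⟩ := exists_le_comap_pathGraph_three hT
  injective_spineMap_of_le_comap π.surjective hπ hinj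

theorem agreeGraph_adj_of_adj_of_adj (hP : Function.Injective (X.spineMap (pathGraph 3)))
    {n : ℕ} {x y : X.obj n} {i c j : Fin (n + 1)} (hic : (X.agreeGraph x y).Adj i c)
    (hcj : (X.agreeGraph x y).Adj c j) (hij : i ≠ j) : (X.agreeGraph x y).Adj i j := by
  let α : Fin 3 → Fin (n + 1) := ![i, c, j]
  have hle : pathGraph 3 ≤ (X.agreeGraph x y).comap α := pathGraph_three_le hic hcj
  have hxy := injective_spineMap_iff.mp hP _ _ (hle.trans (comap_agreeGraph_le α x y))
  refine ⟨hij, ?_⟩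
  simpa [edge_act, α] using congrArg (X.edge 0 2) hxy

theorem agreeGraph_eq_top (hP : Function.Injective (X.spineMap (pathGraph 3))) {n : ℕ}
    {T : SimpleGraph (Fin (n + 1))} (hT : T.Preconnected) {x y : X.obj n}
    (hle : T ≤ X.agreeGraph x y) : X.agreeGraph x y = ⊤ :=
  hT.eq_top_of_le hle (agreeGraph_adj_of_adj_of_adj hP)

end SymSet

/-- `X` is spiny iff for each `n ≥ 1` there exists a spine `T` of `[n]`
such that `𝓔_T : X_n → lim_T X` is injective. -/
theorem stmt0 (X : SymSet) :
    X.Spiny ↔ ∀ n : ℕ, 1 ≤ n → ∃ T : SimpleGraph (Fin (n + 1)), T.IsTree ∧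
      Function.Injective (X.spineMap T) := by
  refine ⟨fun hX n hn => ?_, fun H n hn T hT => ?_⟩
  · obtain ⟨T, -, hT⟩ := (connected_top (V := Fin (n + 1))).exists_isTree_le
    exact ⟨T, hT, hX n hn T hT⟩
  · obtain ⟨T₀, -, hT₀⟩ := H n hn
    obtain ⟨P, hP, hPinj⟩ := H 2 (by norm_num)
    have hpath := SymSet.injective_spineMap_pathGraph_three hP.ne_top_of_fin_three hPinj
    rw [SymSet.injective_spineMap_iff] at hT₀ ⊢
    exact fun x y hxy => hT₀ x y (SymSet.agreeGraph_eq_top hpath hT.connected.preconnected hxy ▸ le_top)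
end

section
/- Let X and Y be symmetric simplicial sets such that X has dimension n and Y has dimension m. Then the product symmetric set X × Y (formed levelwise) has dimension nm + n + m. -/
namespace SymSet

variable (X : SymSet)

def skeleton (k : ℕ) : X.SymSubset where
  carrier N := {x | ∃ (α : Fin (N + 1) → Fin (k + 1)) (q : X.obj k), x = X.act α q}
  act_mem := by
    rintro _ _ β _ ⟨α, q, rfl⟩
    exact ⟨α ∘ β, q, X.act_comp β α q⟩

variable {X}

lemma isSkeletal_iff {k : ℕ} :
    X.IsSkeletal k ↔ ∀ (N : ℕ) (x : X.obj N), x ∈ (X.skeleton k).carrier N := by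
  refine ⟨fun h => h (X.skeleton k) fun x => ⟨id, x, (X.act_id x).symm⟩, ?_⟩
  rintro h W hW N x
  obtain ⟨α, q, rfl⟩ := h N x
  exact W.act_mem α (hW q)

lemma skeleton_mono {j k : ℕ} (hjk : j ≤ k) {N : ℕ} {x : X.obj N}
    (hx : x ∈ (X.skeleton j).carrier N) : x ∈ (X.skeleton k).carrier N := by
  obtain ⟨α, q, rfl⟩ := hx
  -- `q = (q · r) · ι` for the inclusion `ι : [j] → [k]` and a retraction `r` of it
  let r : Fin (k + 1) → Fin (j + 1) := fun i => ⟨min i j, by omega⟩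
  have hrι : r ∘ Fin.castLE (by omega) = id := by
    funext i
    ext
    simp [r, Nat.min_eq_left (Nat.le_of_lt_succ i.isLt)]
  refine ⟨Fin.castLE (by omega) ∘ α, X.act r q, ?_⟩
  rw [X.act_comp, ← Function.comp_assoc, hrι, Function.id_comp]

lemma hasDim_of_isSkeletal {d : ℕ} (hX : X.IsSkeletal d) (x : X.obj d)
    (hx : ∀ k < d, x ∉ (X.skeleton k).carrier d) : X.HasDim d :=
  ⟨hX, fun k hk h => hx k hk (isSkeletal_iff.1 h d x)⟩

lemma HasDim.exists_notMem_skeleton [Nonempty (X.obj 0)] {n : ℕ} (hX : X.HasDim n) :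
    ∃ x : X.obj n, ∀ k < n, x ∉ (X.skeleton k).carrier n := by
  cases n with
  | zero => exact ⟨Classical.arbitrary _, fun k hk => absurd hk (Nat.not_lt_zero k)⟩
  | succ n =>
    by_contra! hlow
    refine hX.2 n n.lt_succ_self (isSkeletal_iff.2 fun N y => ?_)
    obtain ⟨α, x, rfl⟩ := isSkeletal_iff.1 hX.1 N y
    obtain ⟨k, hk, hx⟩ := hlow x
    exact (X.skeleton n).act_mem α (skeleton_mono (Nat.le_of_lt_succ hk) hx)

lemma exists_act_update_eq_self {d k : ℕ} (hk : k < d) {x : X.obj d}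
    (hx : x ∈ (X.skeleton k).carrier d) :
    ∃ a b : Fin (d + 1), a ≠ b ∧ X.act (Function.update id b a) x = x := by
  obtain ⟨α, q, rfl⟩ := hx
  obtain ⟨a, b, hab, hne⟩ : ∃ a b, α a = α b ∧ a ≠ b := by
    by_contra! hinj
    have := Fintype.card_le_of_injective α fun a b h => hinj a b h
    simp only [Fintype.card_fin] at this
    omega
  refine ⟨a, b, hne, ?_⟩
  rw [X.act_comp]
  congr 1
  funext t
  by_cases ht : t = b <;> simp [Function.update, ht, hab]

lemma exists_mem_skeleton_of_act_update_eq_self {d : ℕ} {x : X.obj d} {a b : Fin (d + 1)}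
    (hab : a ≠ b) (hx : X.act (Function.update id b a) x = x) :
    ∃ k < d, x ∈ (X.skeleton k).carrier d := by
  cases d with
  | zero => exact absurd (Fin.subsingleton_one.elim a b) hab
  | succ d =>
    have hmiss : ∀ i, Function.update id b a i ≠ b := by
      intro i
      by_cases hi : i = b <;> simp [Function.update, hi, hab]
    choose δ hδ using fun i => Fin.exists_succAbove_eq (hmiss i)
    refine ⟨d, d.lt_succ_self, δ, X.act b.succAbove x, ?_⟩
    rw [X.act_comp, show b.succAbove ∘ δ = Function.update id b a from funext hδ, hx]

lemma fst_comp_update_comp_section {N n m : ℕ} (E : Fin (N + 1) ≃ Fin (n + 1) × Fin (m + 1))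
    (a b : Fin (N + 1)) :
    (fun t => (E (Function.update id b a t)).1) ∘ (fun i => E.symm (i, (E b).2)) =
      Function.update id (E b).1 (E a).1 := by
  funext i
  by_cases hi : i = (E b).1
  · subst hi
    simp
  · have hib : E.symm (i, (E b).2) ≠ b := fun h => hi (by rw [← h]; simp)
    simp [Function.update, hi, hib]

lemma act_update_eq_self_of_act_fst_comp {N n m : ℕ}
    (E : Fin (N + 1) ≃ Fin (n + 1) × Fin (m + 1)) {x : X.obj n} {a b : Fin (N + 1)}
    (h : X.act (fun t => (E (Function.update id b a t)).1) x = X.act (fun t => (E t).1) x) :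
    X.act (Function.update id (E b).1 (E a).1) x = x := by
  have hsec : (fun t => (E t).1) ∘ (fun i => E.symm (i, (E b).2)) = id := by
    funext i
    simp
  have := congrArg (X.act fun i => E.symm (i, (E b).2)) h
  rwa [X.act_comp, X.act_comp, fst_comp_update_comp_section, hsec, X.act_id] at this

variable (X) in
def prodSimplex (Y : SymSet) {N n m : ℕ} (E : Fin (N + 1) ≃ Fin (n + 1) × Fin (m + 1))
    (x : X.obj n) (y : Y.obj m) : (X.prod Y).obj N :=
  (X.act (fun t => (E t).1) x, Y.act (fun t => (E t).2) y)

lemma prodSimplex_notMem_skeleton {Y : SymSet} {N n m : ℕ}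
    (E : Fin (N + 1) ≃ Fin (n + 1) × Fin (m + 1)) {x : X.obj n} {y : Y.obj m}
    (hx : ∀ k < n, x ∉ (X.skeleton k).carrier n)
    (hy : ∀ k < m, y ∉ (Y.skeleton k).carrier m) :
    ∀ k < N, X.prodSimplex Y E x y ∉ ((X.prod Y).skeleton k).carrier N := by
  intro k hk hw
  obtain ⟨a, b, hab, hfix⟩ := exists_act_update_eq_self hk hw
  obtain ⟨hfix₁, hfix₂⟩ := Prod.ext_iff.1 hfix
  change X.act _ (X.act _ x) = _ at hfix₁
  change Y.act _ (Y.act _ y) = _ at hfix₂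
  rw [X.act_comp] at hfix₁
  rw [Y.act_comp] at hfix₂
  have hE : (E a).1 ≠ (E b).1 ∨ (E a).2 ≠ (E b).2 := by
    by_contra! h
    exact hab (E.injective (Prod.ext h.1 h.2))
  rcases hE with hne | hne
  · obtain ⟨k, hk, hxk⟩ := exists_mem_skeleton_of_act_update_eq_self hne
      (act_update_eq_self_of_act_fst_comp E hfix₁)
    exact hx k hk hxk
  · -- the column case is the row case for `E` followed by swapping the factors
    obtain ⟨k, hk, hyk⟩ := exists_mem_skeleton_of_act_update_eq_self hne
      (act_update_eq_self_of_act_fst_comp (E.trans (Equiv.prodComm _ _)) hfix₂)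
    exact hy k hk hyk

lemma prod_isSkeletal {Y : SymSet} {N n m : ℕ} (hX : X.IsSkeletal n) (hY : Y.IsSkeletal m)
    (E : Fin (N + 1) ≃ Fin (n + 1) × Fin (m + 1)) : (X.prod Y).IsSkeletal N := by
  refine isSkeletal_iff.2 fun L p => ?_
  obtain ⟨σ, x, hx⟩ := isSkeletal_iff.1 hX L p.1
  obtain ⟨τ, y, hy⟩ := isSkeletal_iff.1 hY L p.2
  refine ⟨fun t => E.symm (σ t, τ t), X.prodSimplex Y E x y, Prod.ext ?_ ?_⟩
  · change p.1 = X.act _ (X.act _ x)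
    rw [X.act_comp, hx]
    congr 1
    funext t
    simp
  · change p.2 = Y.act _ (Y.act _ y)
    rw [Y.act_comp, hy]
    congr 1
    funext t
    simp

end SymSet

/-- if (nonempty) `X` has dimension `n` and (nonempty) `Y` has dimension
`m`, then `X × Y` has dimension `nm + n + m`. -/
theorem stmt6 (X Y : SymSet) (n m : ℕ) (hX0 : Nonempty (X.obj 0)) (hY0 : Nonempty (Y.obj 0))
    (hX : X.HasDim n) (hY : Y.HasDim m) :
    (X.prod Y).HasDim (n * m + n + m) := by
  let E : Fin (n * m + n + m + 1) ≃ Fin (n + 1) × Fin (m + 1) :=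
    (finCongr (by ring)).trans finProdFinEquiv.symm
  obtain ⟨x, hx⟩ := hX.exists_notMem_skeleton
  obtain ⟨y, hy⟩ := hY.exists_notMem_skeleton
  exact SymSet.hasDim_of_isSkeletal (SymSet.prod_isSkeletal hX.1 hY.1 E) _
    (SymSet.prodSimplex_notMem_skeleton E hx hy)
end
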